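/- arXiv:2203.00777 — 4 statements merged into one kernel-verified Lean document; each statement's English description precedes it below -/
import Mathlib

section
/- For every integer n ≥ 0 and every real y with −π/2 < y < π/2, the series ∑_{m=n+1}^∞ (C(2m,m)/4^m)·sin(y)^{2m}/(2m−1) converges and equals cos(y) · ∫_0^y (C(2n,n)/4^n)·sin(t)^{2n}·tan(t)·sec(t) dt. -/
/-!
Write `c_m = C(2m,m)/4^m` and `S_N(x) = ∑_{m ≤ N} c_m x^{2m}/(2m-1)`. Because
`(2m+2) c_{m+1} = (2m+1) c_m`, the derivatives of `S_N(sin t)/cos t` telescope to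
`-c_N sin^{2N+1} t / cos² t`, so
`cos y · ∫_0^y c_N sin^{2N+1} t / cos² t dt = -cos y - S_N(sin y)`.
Since `|sin t| < 1` on `(-π/2, π/2)`, these integrals tend to `0` by dominated convergence, whence
`∑_m c_m sin^{2m} y/(2m-1) = -cos y`; subtracting `S_n(sin y)` leaves the tail as the `N = n`
integral, and `sin^{2n} t · tan t · sec t = sin^{2n+1} t / cos² t`.
-/

open Real MeasureTheory Filter Topology Finset

lemma sin_sq_lt_one_of_cos_ne_zero {t : ℝ} (ht : cos t ≠ 0) : sin t ^ 2 < 1 := by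
  have := pow_pos (abs_pos.2 ht) 2
  rw [sq_abs] at this
  linarith [sin_sq_add_cos_sq t]

lemma cos_pos_of_mem_uIcc {a b t : ℝ} (ha : a ∈ Set.Ioo (-(π / 2)) (π / 2))
    (hb : b ∈ Set.Ioo (-(π / 2)) (π / 2)) (ht : t ∈ Set.uIcc a b) : 0 < cos t :=
  cos_pos_of_mem_Ioo <| Set.ordConnected_Ioo.uIcc_subset ha hb ht

noncomputable def centralBinomRatio (m : ℕ) : ℝ := (m.centralBinom : ℝ) / 4 ^ m

lemma centralBinomRatio_zero : centralBinomRatio 0 = 1 := by simp [centralBinomRatio]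

lemma centralBinomRatio_nonneg (m : ℕ) : 0 ≤ centralBinomRatio m := by
  unfold centralBinomRatio; positivity

lemma centralBinomRatio_le_one (m : ℕ) : centralBinomRatio m ≤ 1 := by
  rw [centralBinomRatio, div_le_one (by positivity)]
  exact_mod_cast m.centralBinom_le_four_pow

lemma centralBinomRatio_succ_mul (m : ℕ) :
    centralBinomRatio (m + 1) * (2 * m + 2) = centralBinomRatio m * (2 * m + 1) := by
  have h : ((m : ℝ) + 1) * (m + 1).centralBinom = 2 * (2 * m + 1) * m.centralBinom := by
    exact_mod_cast m.succ_mul_centralBinom_succ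
  simp only [centralBinomRatio, pow_succ]
  field_simp
  linear_combination 2 * h

/-- `-∑ₘ sqrtSeriesTerm m x` is the binomial series of `√(1 - x²)`. -/
noncomputable def sqrtSeriesTerm (m : ℕ) (x : ℝ) : ℝ :=
  centralBinomRatio m * x ^ (2 * m) / (2 * m - 1)

lemma sum_range_sqrtSeriesTerm_zero (N : ℕ) :
    ∑ m ∈ range (N + 1), sqrtSeriesTerm m 0 = -1 := by
  simp [sum_range_succ', sqrtSeriesTerm, centralBinomRatio_zero]

lemma abs_sqrtSeriesTerm_le (m : ℕ) (x : ℝ) : |sqrtSeriesTerm m x| ≤ (x ^ 2) ^ m := by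
  have hden : 1 ≤ |2 * (m : ℝ) - 1| := by
    rcases m.eq_zero_or_pos with rfl | hm
    · norm_num
    · have : (1 : ℝ) ≤ m := by exact_mod_cast hm
      rw [abs_of_pos (by linarith)]; linarith
  rw [sqrtSeriesTerm, abs_div, abs_mul, abs_of_nonneg (centralBinomRatio_nonneg m), pow_mul,
    abs_of_nonneg (by positivity)]
  calc centralBinomRatio m * (x ^ 2) ^ m / |2 * (m : ℝ) - 1|
      ≤ centralBinomRatio m * (x ^ 2) ^ m :=
        div_le_self (mul_nonneg (centralBinomRatio_nonneg m) (by positivity)) hden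
    _ ≤ (x ^ 2) ^ m := mul_le_of_le_one_left (by positivity) (centralBinomRatio_le_one m)

lemma summable_sqrtSeriesTerm {x : ℝ} (hx : x ^ 2 < 1) : Summable (sqrtSeriesTerm · x) :=
  (summable_geometric_of_lt_one (sq_nonneg x) hx).of_norm_bounded (abs_sqrtSeriesTerm_le · x)

lemma hasDerivAt_sin_pow_succ_div_cos (k : ℕ) {u : ℝ} (hu : cos u ≠ 0) :
    HasDerivAt (fun u => sin u ^ (k + 1) / cos u)
      (((k + 1) * sin u ^ k - k * sin u ^ (k + 2)) / cos u ^ 2) u := by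
  refine (((hasDerivAt_sin u).fun_pow (k + 1)).fun_div (hasDerivAt_cos u) hu).congr_deriv ?_
  push_cast
  congr 1
  linear_combination ((k : ℝ) + 1) * sin u ^ k * sin_sq_add_cos_sq u

lemma hasDerivAt_sum_sqrtSeriesTerm_sin_div_cos (N : ℕ) {u : ℝ} (hu : cos u ≠ 0) :
    HasDerivAt (fun u => (∑ m ∈ range (N + 1), sqrtSeriesTerm m (sin u)) / cos u)
      (-(centralBinomRatio N * sin u ^ (2 * N + 1) / cos u ^ 2)) u := by
  induction N with
  | zero =>
    have hfun : (fun u => (∑ m ∈ range (0 + 1), sqrtSeriesTerm m (sin u)) / cos u)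
        = fun u => -1 / cos u := by
      funext u; simp [sqrtSeriesTerm, centralBinomRatio_zero]
    rw [hfun]
    refine ((hasDerivAt_const u (-1 : ℝ)).fun_div (hasDerivAt_cos u) hu).congr_deriv ?_
    simp [centralBinomRatio_zero, neg_div]
  | succ N ih =>
    have hfun : (fun u => (∑ m ∈ range (N + 1 + 1), sqrtSeriesTerm m (sin u)) / cos u)
        = fun u => (∑ m ∈ range (N + 1), sqrtSeriesTerm m (sin u)) / cos u
          + centralBinomRatio (N + 1) / (2 * (N + 1) - 1) * (sin u ^ (2 * N + 1 + 1) / cos u) := by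
      funext u
      rw [sum_range_succ, add_div]
      simp only [sqrtSeriesTerm]
      push_cast
      ring
    have hN : (2 * ((N : ℝ) + 1) - 1) ≠ 0 := ne_of_gt (by linarith [N.cast_nonneg (α := ℝ)])
    rw [hfun]
    refine (ih.fun_add ((hasDerivAt_sin_pow_succ_div_cos (2 * N + 1) hu).const_mul
      (centralBinomRatio (N + 1) / (2 * (N + 1) - 1)))).congr_deriv ?_
    push_cast
    field_simp
    linear_combination (sin u ^ (2 * N + 1)) * centralBinomRatio_succ_mul N

noncomputable def tailIntegrand (N : ℕ) (t : ℝ) : ℝ :=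
  centralBinomRatio N * sin t ^ (2 * N + 1) / cos t ^ 2

lemma cos_mul_integral_tailIntegrand (N : ℕ) {y : ℝ} (hy : y ∈ Set.Ioo (-(π / 2)) (π / 2)) :
    cos y * ∫ t in (0 : ℝ)..y, tailIntegrand N t
      = -cos y - ∑ m ∈ range (N + 1), sqrtSeriesTerm m (sin y) := by
  have hcos : ∀ t ∈ Set.uIcc 0 y, cos t ≠ 0 := fun t ht =>
    (cos_pos_of_mem_uIcc ⟨by linarith [pi_pos], by linarith [pi_pos]⟩ hy ht).ne'
  have hderiv : ∀ t ∈ Set.uIcc 0 y, HasDerivAt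
      (fun u => -((∑ m ∈ range (N + 1), sqrtSeriesTerm m (sin u)) / cos u))
      (tailIntegrand N t) t :=
    fun t ht => (hasDerivAt_sum_sqrtSeriesTerm_sin_div_cos N (hcos t ht)).fun_neg.congr_deriv
      (neg_neg _)
  have hint : IntervalIntegrable (tailIntegrand N) volume 0 y :=
    ((by fun_prop : Continuous fun t => centralBinomRatio N * sin t ^ (2 * N + 1)).continuousOn.div
      (by fun_prop) fun t ht => pow_ne_zero 2 (hcos t ht)).intervalIntegrable
  rw [intervalIntegral.integral_eq_sub_of_hasDerivAt hderiv hint, sin_zero,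
    sum_range_sqrtSeriesTerm_zero, cos_zero]
  field_simp [hcos y Set.right_mem_uIcc]
  ring

lemma norm_tailIntegrand_le (N : ℕ) (t : ℝ) :
    ‖tailIntegrand N t‖ ≤ (sin t ^ 2) ^ N / cos t ^ 2 := by
  rw [tailIntegrand, norm_div, norm_mul, norm_pow, norm_pow, Real.norm_eq_abs, Real.norm_eq_abs,
    Real.norm_eq_abs, sq_abs, abs_of_nonneg (centralBinomRatio_nonneg N)]
  gcongr
  calc centralBinomRatio N * |sin t| ^ (2 * N + 1)
      ≤ 1 * |sin t| ^ (2 * N) :=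
        mul_le_mul (centralBinomRatio_le_one N) (pow_le_pow_of_le_one (abs_nonneg _)
          (abs_sin_le_one t) (Nat.le_succ _)) (by positivity) zero_le_one
    _ = (sin t ^ 2) ^ N := by rw [one_mul, pow_mul, sq_abs]

lemma tendsto_tailIntegrand (t : ℝ) : Tendsto (fun N => tailIntegrand N t) atTop (𝓝 0) := by
  by_cases ht : cos t = 0
  · simp [tailIntegrand, ht]
  refine squeeze_zero_norm (norm_tailIntegrand_le · t) ?_
  simpa using (tendsto_pow_atTop_nhds_zero_of_lt_one (sq_nonneg (sin t))
    (sin_sq_lt_one_of_cos_ne_zero ht)).div_const (cos t ^ 2)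

lemma tendsto_integral_tailIntegrand {y : ℝ} (hy : y ∈ Set.Ioo (-(π / 2)) (π / 2)) :
    Tendsto (fun N => ∫ t in (0 : ℝ)..y, tailIntegrand N t) atTop (𝓝 0) := by
  have hcos : ∀ t ∈ Set.uIcc 0 y, cos t ≠ 0 := fun t ht =>
    (cos_pos_of_mem_uIcc ⟨by linarith [pi_pos], by linarith [pi_pos]⟩ hy ht).ne'
  have hbound : IntervalIntegrable (fun t => 1 / cos t ^ 2) volume 0 y :=
    (continuousOn_const.div (by fun_prop) fun t ht => pow_ne_zero 2 (hcos t ht)).intervalIntegrable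
  simpa using intervalIntegral.tendsto_integral_filter_of_dominated_convergence _
    (Eventually.of_forall fun N => (by unfold tailIntegrand; fun_prop : Measurable
      (tailIntegrand N)).aestronglyMeasurable)
    (Eventually.of_forall fun N => ae_of_all _ fun t _ => (norm_tailIntegrand_le N t).trans
      (div_le_div_of_nonneg_right (pow_le_one₀ (sq_nonneg _) (sin_sq_le_one t)) (sq_nonneg _)))
    hbound (ae_of_all _ fun t _ => tendsto_tailIntegrand t)

lemma hasSum_sqrtSeriesTerm_sin {y : ℝ} (hy : y ∈ Set.Ioo (-(π / 2)) (π / 2)) :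
    HasSum (sqrtSeriesTerm · (sin y)) (-cos y) := by
  have hcos := (cos_pos_of_mem_Ioo hy).ne'
  refine (summable_sqrtSeriesTerm (sin_sq_lt_one_of_cos_ne_zero hcos)).hasSum_iff_tendsto_nat.2 ?_
  refine (tendsto_add_atTop_iff_nat 1).1 ?_
  have hpartial : ∀ N, ∑ m ∈ range (N + 1), sqrtSeriesTerm m (sin y)
      = -cos y - cos y * ∫ t in (0 : ℝ)..y, tailIntegrand N t := fun N => by
    rw [cos_mul_integral_tailIntegrand N hy]; ring
  simp only [hpartial]
  simpa using (tendsto_integral_tailIntegrand hy).const_mul (cos y) |>.const_sub (-cos y)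

/-- For every integer `n ≥ 0` and every real `y` with `−π/2 < y < π/2`,
the series `∑_{m=n+1}^∞ (C(2m,m)/4^m)·sin(y)^{2m}/(2m−1)` converges and equals
`cos(y) · ∫_0^y (C(2n,n)/4^n)·sin(t)^{2n}·tan(t)·sec(t) dt`. -/
theorem apery_tail_2m_minus_one (n : ℕ) (y : ℝ) (hy : -(π / 2) < y) (hy' : y < π / 2) :
    HasSum
      (fun k : ℕ =>
        (Nat.choose (2 * (n + 1 + k)) (n + 1 + k) : ℝ) / 4 ^ (n + 1 + k) *
          Real.sin y ^ (2 * (n + 1 + k)) / (2 * ((n : ℝ) + 1 + (k : ℝ)) - 1))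
      (Real.cos y *
        ∫ t in (0 : ℝ)..y,
          (Nat.choose (2 * n) n : ℝ) / 4 ^ n * Real.sin t ^ (2 * n) *
            Real.tan t * (1 / Real.cos t)) := by
  have htail := (hasSum_nat_add_iff' (n + 1)).2 (hasSum_sqrtSeriesTerm_sin ⟨hy, hy'⟩)
  rw [← cos_mul_integral_tailIntegrand n ⟨hy, hy'⟩] at htail
  rw [intervalIntegral.integral_congr (g := tailIntegrand n) fun t _ => by
    simp only [tailIntegrand, centralBinomRatio, Nat.centralBinom_eq_two_mul_choose,
      tan_eq_sin_div_cos]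
    ring]
  refine htail.congr_fun fun k => ?_
  simp only [sqrtSeriesTerm, centralBinomRatio, Nat.centralBinom_eq_two_mul_choose, add_comm k]
  push_cast
  ring
end

section
/- For every integer n ≥ 0 and every real y with −π/2 < y < π/2, sin(y) · ∑_{m=n+1}^∞ (C(2m,m)/4^m)·sin(y)^{2m}/(2m+1) = ∫_0^y (C(2n,n)/4^n)·sin(t)^{2n}·sin(t)·tan(t) dt − ∫_0^y ( ∫_0^t (C(2n,n)/4^n)·sin(u)^{2n}·tan(u)·sec(u) du ) dt. -/
/-!
Write `c m = C(2m,m)/4^m` and `J k y = ∫₀^y ∫₀^t sin^k u du dt`. Since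
`d/du (sin^(k+1) u / cos u) = sin^k u / cos² u + k sin^k u`, integrating the inner integral on the
right by parts turns the right-hand side into `b n`, where `b m = (2m+1) c m J (2m+1) y`.
Integrating the reduction formula for `∫ sin^(k+2)` once more and using
`(2m+2) c (m+1) = (2m+1) c m` gives `sin y · c (m+1) sin^(2m+2) y / (2m+3) = b m - b (m+1)`, so the
series telescopes to `b n`, because `|b m| ≤ (2m+1) |sin y|^(2m+1) y² → 0`.
-/

open Real MeasureTheory Filter Topology Set

noncomputable def centralCoeff (m : ℕ) : ℝ := (Nat.choose (2 * m) m : ℝ) / 4 ^ m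

lemma centralCoeff_nonneg (m : ℕ) : 0 ≤ centralCoeff m := by
  unfold centralCoeff; positivity

lemma centralCoeff_le_one (m : ℕ) : centralCoeff m ≤ 1 := by
  rw [centralCoeff, div_le_one (by positivity), ← Nat.centralBinom_eq_two_mul_choose]
  exact_mod_cast Nat.centralBinom_le_four_pow m

lemma two_mul_add_two_mul_centralCoeff_succ (m : ℕ) :
    (2 * m + 2) * centralCoeff (m + 1) = (2 * m + 1) * centralCoeff m := by
  have h : ((m + 1) * Nat.centralBinom (m + 1) : ℝ) = 2 * (2 * m + 1) * Nat.centralBinom m := by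
    exact_mod_cast Nat.succ_mul_centralBinom_succ m
  simp only [centralCoeff, ← Nat.centralBinom_eq_two_mul_choose, pow_succ]
  field_simp
  linear_combination 2 * h

-- `x * ∑ m, arcsinSeriesTerm m x` is the Maclaurin series of `arcsin x`.
noncomputable def arcsinSeriesTerm (m : ℕ) (x : ℝ) : ℝ :=
  centralCoeff m * x ^ (2 * m) / (2 * m + 1)

lemma summable_arcsinSeriesTerm {x : ℝ} (hx : |x| < 1) : Summable (arcsinSeriesTerm · x) := by
  have hx2 : x ^ 2 < 1 := (sq_lt_one_iff_abs_lt_one x).2 hx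
  have hpow (m : ℕ) : 0 ≤ x ^ (2 * m) := (even_two_mul m).pow_nonneg x
  refine Summable.of_nonneg_of_le
    (fun m => by have := centralCoeff_nonneg m; have := hpow m; unfold arcsinSeriesTerm; positivity)
    (fun m => ?_) (summable_geometric_of_lt_one (sq_nonneg x) hx2)
  calc arcsinSeriesTerm m x ≤ centralCoeff m * x ^ (2 * m) :=
        div_le_self (mul_nonneg (centralCoeff_nonneg m) (hpow m))
          (by linarith [(m.cast_nonneg : (0 : ℝ) ≤ m)])
    _ ≤ x ^ (2 * m) := mul_le_of_le_one_left (hpow m) (centralCoeff_le_one m)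
    _ = (x ^ 2) ^ m := pow_mul x 2 m

lemma tsum_sub_succ_eq_of_tendsto {G : Type*} [AddCommGroup G] [TopologicalSpace G]
    [IsTopologicalAddGroup G] [T2Space G] {b : ℕ → G} (hb : Tendsto b atTop (𝓝 0))
    (hs : Summable fun k => b k - b (k + 1)) : ∑' k, (b k - b (k + 1)) = b 0 := by
  have h := hs.hasSum.tendsto_sum_nat
  simp_rw [Finset.sum_range_sub'] at h
  exact tendsto_nhds_unique h (by simpa using tendsto_const_nhds.sub hb)

noncomputable def sinPowDoubleIntegral (k : ℕ) (y : ℝ) : ℝ :=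
  ∫ t in 0..y, ∫ u in 0..t, sin u ^ k

lemma integral_sin_pow_mul_cos (k : ℕ) (y : ℝ) :
    ∫ t in 0..y, sin t ^ k * cos t = sin y ^ (k + 1) / (k + 1) := by
  simpa using integral_sin_pow_mul_cos_pow_odd (a := 0) (b := y) k 0

lemma continuous_integral_sin_pow (k : ℕ) : Continuous fun t => ∫ u in 0..t, sin u ^ k :=
  intervalIntegral.continuous_primitive (fun _ _ => (continuous_sin.pow k).intervalIntegrable _ _) 0

lemma sinPowDoubleIntegral_add_two (k : ℕ) (y : ℝ) :
    (k + 2) * sinPowDoubleIntegral (k + 2) y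
      = (k + 1) * sinPowDoubleIntegral k y - sin y ^ (k + 2) / (k + 2) := by
  have inner : ∀ t, (k + 2) * ∫ u in 0..t, sin u ^ (k + 2)
      = (k + 1) * (∫ u in 0..t, sin u ^ k) - sin t ^ (k + 1) * cos t := by
    intro t
    rw [integral_sin_pow, sin_zero, zero_pow k.succ_ne_zero, zero_mul, zero_sub]
    field_simp
    ring
  have h : ∫ t in 0..y, sin t ^ (k + 1) * cos t = sin y ^ (k + 2) / (k + 2) := by
    rw [integral_sin_pow_mul_cos]; push_cast; ring
  rw [sinPowDoubleIntegral, sinPowDoubleIntegral, ← intervalIntegral.integral_const_mul,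
    intervalIntegral.integral_congr fun t _ => inner t,
    intervalIntegral.integral_sub
      (((continuous_integral_sin_pow k).const_mul _).intervalIntegrable _ _)
      ((by fun_prop : Continuous fun t => sin t ^ (k + 1) * cos t).intervalIntegrable _ _),
    intervalIntegral.integral_const_mul, h]

lemma abs_sin_le_abs_sin_of_mem_uIcc {y t : ℝ} (hy : |y| ≤ π / 2) (ht : t ∈ uIcc 0 y) :
    |sin t| ≤ |sin y| := by
  have hy' := abs_le.1 hy
  rcases mem_uIcc.1 ht with ⟨h0, hty⟩ | ⟨hyt, h0⟩
  · rw [abs_of_nonneg (sin_nonneg_of_nonneg_of_le_pi h0 (by linarith))]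
    exact (sin_le_sin_of_le_of_le_pi_div_two (by linarith) hy'.2 hty).trans (le_abs_self _)
  · rw [abs_of_nonpos (sin_nonpos_of_nonpos_of_neg_pi_le h0 (by linarith))]
    exact (neg_le_neg (sin_le_sin_of_le_of_le_pi_div_two hy'.1 (by linarith) hyt)).trans
      (neg_le_abs _)

lemma abs_sinPowDoubleIntegral_le (k : ℕ) {y : ℝ} (hy : |y| ≤ π / 2) :
    |sinPowDoubleIntegral k y| ≤ |sin y| ^ k * y ^ 2 := by
  have hsin {t : ℝ} (ht : t ∈ uIcc 0 y) : |sin t ^ k| ≤ |sin y| ^ k := by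
    rw [abs_pow]; exact pow_le_pow_left₀ (abs_nonneg _) (abs_sin_le_abs_sin_of_mem_uIcc hy ht) k
  have inner : ∀ t ∈ uIoc 0 y, ‖∫ u in 0..t, sin u ^ k‖ ≤ |sin y| ^ k * |y| := by
    intro t ht
    have ht' := uIoc_subset_uIcc ht
    have h := intervalIntegral.norm_integral_le_of_norm_le_const (a := 0) (b := t)
      (C := |sin y| ^ k) (f := fun u => sin u ^ k) fun u hu =>
        hsin (uIcc_subset_uIcc left_mem_uIcc ht' (uIoc_subset_uIcc hu))
    have := abs_sub_left_of_mem_uIcc ht'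
    simp only [sub_zero] at h this
    exact h.trans (by gcongr)
  have h := intervalIntegral.norm_integral_le_of_norm_le_const inner
  rw [sub_zero] at h
  rw [sinPowDoubleIntegral, ← Real.norm_eq_abs]
  calc _ ≤ _ := h
    _ = _ := by rw [mul_assoc, ← sq, sq_abs]

noncomputable def tailIntegral (m : ℕ) (y : ℝ) : ℝ :=
  (2 * m + 1) * centralCoeff m * sinPowDoubleIntegral (2 * m + 1) y

lemma sin_mul_arcsinSeriesTerm_succ (m : ℕ) (y : ℝ) :
    sin y * arcsinSeriesTerm (m + 1) (sin y) = tailIntegral m y - tailIntegral (m + 1) y := by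
  have hJ := sinPowDoubleIntegral_add_two (2 * m + 1) y
  have hc := two_mul_add_two_mul_centralCoeff_succ m
  rw [show 2 * m + 1 + 2 = 2 * (m + 1) + 1 by ring] at hJ
  simp only [arcsinSeriesTerm, tailIntegral]
  push_cast at hJ ⊢
  linear_combination centralCoeff (m + 1) * hJ + sinPowDoubleIntegral (2 * m + 1) y * hc

lemma cos_pos_of_abs_lt_pi_div_two {y : ℝ} (hy : |y| < π / 2) : 0 < cos y :=
  cos_pos_of_mem_Ioo ⟨by linarith [neg_abs_le y], by linarith [le_abs_self y]⟩

lemma abs_sin_lt_one_of_abs_lt_pi_div_two {y : ℝ} (hy : |y| < π / 2) : |sin y| < 1 := by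
  have hcos := cos_pos_of_abs_lt_pi_div_two hy
  rw [← sq_lt_one_iff_abs_lt_one]
  nlinarith [sin_sq_add_cos_sq y]

lemma tendsto_tailIntegral {y : ℝ} (hy : |y| < π / 2) :
    Tendsto (tailIntegral · y) atTop (𝓝 0) := by
  have hsin := abs_sin_lt_one_of_abs_lt_pi_div_two hy
  have hlim :
      Tendsto (fun m : ℕ => ((2 * m + 1 : ℕ) : ℝ) * |sin y| ^ (2 * m + 1)) atTop (𝓝 0) :=
    (tendsto_self_mul_const_pow_of_lt_one (abs_nonneg _) hsin).comp
      (tendsto_atTop_mono (fun m => by dsimp only [id]; omega) tendsto_id)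
  refine squeeze_zero_norm (fun m => ?_) (by simpa using hlim.mul_const (y ^ 2))
  have hJ := abs_sinPowDoubleIntegral_le (2 * m + 1) hy.le
  rw [tailIntegral, Real.norm_eq_abs, abs_mul, abs_mul, abs_of_nonneg (centralCoeff_nonneg m),
    abs_of_nonneg (by positivity)]
  calc _ ≤ (2 * (m : ℝ) + 1) * 1 * (|sin y| ^ (2 * m + 1) * y ^ 2) := by
        gcongr; exact centralCoeff_le_one m
    _ = _ := by ring

lemma integral_sin_pow_div_cos_sq (k : ℕ) {t : ℝ} (hcos : ∀ u ∈ uIcc 0 t, cos u ≠ 0) :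
    ∫ u in 0..t, sin u ^ k / cos u ^ 2
      = sin t ^ (k + 1) / cos t - k * ∫ u in 0..t, sin u ^ k := by
  have hderiv : ∀ u ∈ uIcc 0 t, HasDerivAt (fun z => sin z ^ (k + 1) / cos z)
      (sin u ^ k / cos u ^ 2 + k * sin u ^ k) u := by
    intro u hu
    have hu' := hcos u hu
    refine (((hasDerivAt_sin u).fun_pow (k + 1)).div (hasDerivAt_cos u) hu').congr_deriv ?_
    field_simp
    push_cast
    linear_combination sin u ^ k * sin_sq_add_cos_sq u
  have hint₁ : IntervalIntegrable (fun u => sin u ^ k / cos u ^ 2) volume 0 t :=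
    ContinuousOn.intervalIntegrable (by
      refine (continuous_sin.pow k).continuousOn.div (continuous_cos.pow 2).continuousOn ?_
      exact fun u hu => pow_ne_zero 2 (hcos u hu))
  have hint₂ : IntervalIntegrable (fun u => k * sin u ^ k) volume 0 t :=
    (by fun_prop : Continuous fun u => k * sin u ^ k).intervalIntegrable _ _
  have h := intervalIntegral.integral_eq_sub_of_hasDerivAt hderiv (hint₁.add hint₂)
  rw [intervalIntegral.integral_add hint₁ hint₂, intervalIntegral.integral_const_mul] at h
  rw [sin_zero, zero_pow k.succ_ne_zero, zero_div, sub_zero] at h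
  linarith

lemma integral_sin_pow_mul_tan_sub_integral (c : ℝ) (k : ℕ) {y : ℝ}
    (hcos : ∀ t ∈ uIcc 0 y, cos t ≠ 0) :
    (∫ t in 0..y, c * sin t ^ k * sin t * tan t)
      - ∫ t in 0..y, ∫ u in 0..t, c * sin u ^ k * tan u * (1 / cos u)
      = c * ((k + 1) * sinPowDoubleIntegral (k + 1) y) := by
  have houter : ∫ t in 0..y, c * sin t ^ k * sin t * tan t
      = ∫ t in 0..y, c * (sin t ^ (k + 2) / cos t) :=
    intervalIntegral.integral_congr fun t _ => by simp only [tan_eq_sin_div_cos]; ring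
  have hinner : ∀ t ∈ uIcc 0 y, ∫ u in 0..t, c * sin u ^ k * tan u * (1 / cos u)
      = c * (sin t ^ (k + 2) / cos t) - c * ((k + 1) * ∫ u in 0..t, sin u ^ (k + 1)) := by
    intro t ht
    have hsub := uIcc_subset_uIcc left_mem_uIcc ht
    rw [intervalIntegral.integral_congr (g := fun u => c * (sin u ^ (k + 1) / cos u ^ 2))
        fun u _ => by simp only [tan_eq_sin_div_cos]; ring,
      intervalIntegral.integral_const_mul,
      integral_sin_pow_div_cos_sq (k + 1) fun u hu => hcos u (hsub hu)]
    push_cast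
    ring
  have hint₁ : IntervalIntegrable (fun t => c * (sin t ^ (k + 2) / cos t)) volume 0 y :=
    (continuousOn_const.mul
      ((continuous_sin.pow _).continuousOn.div continuous_cos.continuousOn hcos)).intervalIntegrable
  have hint₂ : IntervalIntegrable (fun t => c * ((k + 1) * ∫ u in 0..t, sin u ^ (k + 1)))
      volume 0 y := (by fun_prop : Continuous _).intervalIntegrable _ _
  rw [houter, intervalIntegral.integral_congr hinner, intervalIntegral.integral_sub hint₁ hint₂,
    intervalIntegral.integral_const_mul, intervalIntegral.integral_const_mul,
    intervalIntegral.integral_const_mul, sinPowDoubleIntegral]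
  ring

/-- For every integer `n ≥ 0` and real `y` with `−π/2 < y < π/2`,
`sin(y) · ∑_{m=n+1}^∞ (C(2m,m)/4^m)·sin(y)^{2m}/(2m+1)`
equals
`∫_0^y (C(2n,n)/4^n)·sin(t)^{2n}·sin(t)·tan(t) dt −
 ∫_0^y (∫_0^t (C(2n,n)/4^n)·sin(u)^{2n}·tan(u)·sec(u) du) dt`. -/
theorem apery_tail_2m_plus_one (n : ℕ) (y : ℝ) (hy : -(π / 2) < y) (hy' : y < π / 2) :
    Summable
      (fun k : ℕ =>
        (Nat.choose (2 * (n + 1 + k)) (n + 1 + k) : ℝ) / 4 ^ (n + 1 + k) *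
          Real.sin y ^ (2 * (n + 1 + k)) / (2 * ((n : ℝ) + 1 + (k : ℝ)) + 1)) ∧
    Real.sin y *
        ∑' k : ℕ,
          (Nat.choose (2 * (n + 1 + k)) (n + 1 + k) : ℝ) / 4 ^ (n + 1 + k) *
            Real.sin y ^ (2 * (n + 1 + k)) / (2 * ((n : ℝ) + 1 + (k : ℝ)) + 1) =
      (∫ t in (0 : ℝ)..y,
          (Nat.choose (2 * n) n : ℝ) / 4 ^ n * Real.sin t ^ (2 * n) *
            Real.sin t * Real.tan t) -
        ∫ t in (0 : ℝ)..y,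
          ∫ u in (0 : ℝ)..t,
            (Nat.choose (2 * n) n : ℝ) / 4 ^ n * Real.sin u ^ (2 * n) *
              Real.tan u * (1 / Real.cos u) := by
  have hy₀ : |y| < π / 2 := abs_lt.2 ⟨hy, hy'⟩
  have hcos : ∀ t ∈ uIcc 0 y, cos t ≠ 0 := fun t ht => by
    have ht' := abs_sub_left_of_mem_uIcc ht
    rw [sub_zero, sub_zero] at ht'
    exact (cos_pos_of_abs_lt_pi_div_two (ht'.trans_lt hy₀)).ne'
  have hterm : (fun k : ℕ => (Nat.choose (2 * (n + 1 + k)) (n + 1 + k) : ℝ) / 4 ^ (n + 1 + k) *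
      sin y ^ (2 * (n + 1 + k)) / (2 * ((n : ℝ) + 1 + (k : ℝ)) + 1))
      = fun k => arcsinSeriesTerm (n + 1 + k) (sin y) := by
    ext k; simp [arcsinSeriesTerm, centralCoeff]
  have hsum : Summable fun k => arcsinSeriesTerm (n + 1 + k) (sin y) :=
    (summable_arcsinSeriesTerm (abs_sin_lt_one_of_abs_lt_pi_div_two hy₀)).comp_injective
      (add_right_injective (n + 1))
  have htelescope (k : ℕ) : sin y * arcsinSeriesTerm (n + 1 + k) (sin y)
      = tailIntegral (n + k) y - tailIntegral (n + k + 1) y := by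
    rw [add_right_comm]; exact sin_mul_arcsinSeriesTerm_succ (n + k) y
  rw [hterm, integral_sin_pow_mul_tan_sub_integral _ (2 * n) hcos]
  refine ⟨hsum, ?_⟩
  calc sin y * ∑' k, arcsinSeriesTerm (n + 1 + k) (sin y)
      = ∑' k, (tailIntegral (n + k) y - tailIntegral (n + k + 1) y) := by
        rw [← tsum_mul_left]; exact tsum_congr htelescope
    _ = tailIntegral n y :=
        tsum_sub_succ_eq_of_tendsto (b := fun k => tailIntegral (n + k) y)
          ((tendsto_tailIntegral hy₀).comp (tendsto_atTop_mono (Nat.le_add_left · n) tendsto_id))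
          ((hsum.mul_left (sin y)).congr htelescope)
    _ = _ := by rw [tailIntegral, centralCoeff]; push_cast; ring
end

section
/- For every integer n ≥ 0 and every real y with −π/2 < y < π/2, sin(y) · ∑_{m=n}^∞ (C(2m,m)/4^m)·sin(y)^{2m}/(2m+1) = ∫_0^y (C(2n,n)/4^n)·sin(t)^{2n}·sec(t) dt − ∫_0^y ( ∫_0^t (C(2n,n)/4^n)·sin(u)^{2n}·sec(u)·tan(u) du ) dt. -/
/-!
Write `c m = C(2m,m)/4^m`, `T x = ∑_{m ≥ n} c m x^{2m}` and `S x = ∑_{m ≥ n} c m x^{2m}/(2m+1)`,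
so that `(x · S x)' = T x` termwise. The recursion `(2m+2) c (m+1) = (2m+1) c m` gives
`(1 - x²) T' = x T + 2n c n x^{2n-1}`, hence `cos t · T (sin t)` has derivative
`2n c n sin^{2n-1} t`. Since `f t = c n sin^{2n} t / cos t` satisfies
`f' = 2n c n sin^{2n-1} + f tan`, the inner integral equals `f t - cos t · T (sin t)`, and the
difference of the outer integrals is `∫₀^y cos t · T (sin t) dt = sin y · S (sin y)`.
-/

open Real MeasureTheory Function Set intervalIntegral

section PowerSeries

variable {a : ℕ → ℝ} {C : ℝ} {e : ℕ → ℕ} {x : ℝ}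

lemma summable_natCast_mul_pow_sub_one {r : ℝ} (hr : |r| < 1) :
    Summable (fun j : ℕ => (j : ℝ) * r ^ (j - 1)) := by
  refine (summable_nat_add_iff 1).mp ?_
  have hj : Summable (fun j : ℕ => (j : ℝ) ^ 1 * r ^ j) :=
    summable_pow_mul_geometric_of_norm_lt_one 1 (by simpa using hr)
  refine (hj.add (summable_geometric_of_abs_lt_one hr)).congr fun j => ?_
  push_cast
  simp only [pow_one]
  ring

lemma summable_mul_pow_of_injective (ha : ∀ k, |a k| ≤ C) (he : Injective e) (hx : |x| < 1) :
    Summable (fun k => a k * x ^ e k) := by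
  refine .of_norm_bounded
    (((summable_geometric_of_lt_one (abs_nonneg x) hx).comp_injective he).mul_left C)
    fun k => ?_
  rw [Real.norm_eq_abs, abs_mul, abs_pow]
  exact mul_le_mul_of_nonneg_right (ha k) (by positivity)

lemma summable_mul_natCast_mul_pow_sub_one_of_injective (ha : ∀ k, |a k| ≤ C)
    (he : Injective e) (hx : |x| < 1) :
    Summable (fun k => a k * (e k * x ^ (e k - 1))) := by
  refine .of_norm_bounded
    (((summable_natCast_mul_pow_sub_one (abs_abs x ▸ hx)).comp_injective he).mul_left C)
    fun k => ?_
  rw [Real.norm_eq_abs, abs_mul, abs_mul, abs_pow, Nat.abs_cast]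
  exact mul_le_mul_of_nonneg_right (ha k) (by positivity)

lemma hasDerivAt_tsum_mul_pow (ha : ∀ k, |a k| ≤ C) (he : Injective e) (hx : |x| < 1) :
    HasDerivAt (fun z => ∑' k, a k * z ^ e k) (∑' k, a k * (e k * x ^ (e k - 1))) x := by
  obtain ⟨r, hxr, hr⟩ := exists_between hx
  have hr' : |r| < 1 := by rwa [abs_of_nonneg ((abs_nonneg x).trans hxr.le)]
  have hC : 0 ≤ C := (abs_nonneg _).trans (ha 0)
  refine hasDerivAt_tsum_of_isPreconnected (t := Ioo (-r) r)
    (summable_mul_natCast_mul_pow_sub_one_of_injective (fun _ => (abs_of_nonneg hC).le) he hr')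
    isOpen_Ioo isPreconnected_Ioo (fun k z _ => (hasDerivAt_pow (e k) z).const_mul (a k))
    (fun k z hz => ?_) (abs_lt.mp hxr) (summable_mul_pow_of_injective ha he hx) (abs_lt.mp hxr)
  have hz : |z| ≤ r := (abs_lt.mpr hz).le
  rw [Real.norm_eq_abs, abs_mul, abs_mul, abs_pow, Nat.abs_cast]
  gcongr
  exact ha k

end PowerSeries

noncomputable def scaledCentralBinom (m : ℕ) : ℝ := m.centralBinom / 4 ^ m

lemma abs_scaledCentralBinom_le_one (m : ℕ) : |scaledCentralBinom m| ≤ 1 := by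
  rw [scaledCentralBinom, abs_of_nonneg (by positivity), div_le_one (by positivity)]
  exact_mod_cast Nat.centralBinom_le_four_pow m

lemma two_mul_add_two_mul_scaledCentralBinom_succ (m : ℕ) :
    (2 * m + 2 : ℝ) * scaledCentralBinom (m + 1) = (2 * m + 1) * scaledCentralBinom m := by
  have h : ((m + 1 : ℕ) : ℝ) * (m + 1).centralBinom = 2 * (2 * m + 1) * m.centralBinom := by
    exact_mod_cast Nat.succ_mul_centralBinom_succ m
  simp only [scaledCentralBinom, pow_succ]
  push_cast at h
  field_simp
  linear_combination 2 * h

noncomputable def binomTail (n : ℕ) (x : ℝ) : ℝ :=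
  ∑' k, scaledCentralBinom (n + k) * x ^ (2 * (n + k))

noncomputable def binomTailDiv (n : ℕ) (x : ℝ) : ℝ :=
  ∑' k : ℕ, scaledCentralBinom (n + k) * x ^ (2 * (n + k)) / (2 * ((n : ℝ) + (k : ℝ)) + 1)

section

variable (n : ℕ) {x : ℝ}

lemma abs_scaledCentralBinom_div_le_one (k : ℕ) :
    |scaledCentralBinom (n + k) / (2 * ((n : ℝ) + (k : ℝ)) + 1)| ≤ 1 := by
  rw [abs_div, abs_of_pos (by positivity : (0 : ℝ) < 2 * ((n : ℝ) + (k : ℝ)) + 1)]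
  exact (div_le_self (abs_nonneg _) (le_add_of_nonneg_left (by positivity))).trans
    (abs_scaledCentralBinom_le_one _)

lemma summable_binomTailDiv (hx : |x| < 1) :
    Summable (fun k : ℕ =>
      scaledCentralBinom (n + k) * x ^ (2 * (n + k)) / (2 * ((n : ℝ) + (k : ℝ)) + 1)) :=
  (summable_mul_pow_of_injective (abs_scaledCentralBinom_div_le_one n)
    (e := fun k => 2 * (n + k)) (fun i j h => by simpa using h) hx).congr fun k => by ring

lemma binomTail_zero : binomTail n 0 = scaledCentralBinom n * 0 ^ (2 * n) := by
  rw [binomTail, tsum_eq_single 0 fun k hk => by simp [hk]]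
  simp

lemma hasDerivAt_binomTail (hx : |x| < 1) :
    HasDerivAt (binomTail n)
      (∑' k, scaledCentralBinom (n + k) * ((2 * (n + k) : ℕ) * x ^ (2 * (n + k) - 1))) x :=
  hasDerivAt_tsum_mul_pow (fun k => abs_scaledCentralBinom_le_one (n + k))
    (fun i j h => by simpa using h) hx

lemma one_sub_sq_mul_deriv_binomTail (hx : |x| < 1) :
    (1 - x ^ 2) * deriv (binomTail n) x =
      x * binomTail n x + 2 * n * scaledCentralBinom n * x ^ (2 * n - 1) := by
  set g : ℕ → ℝ := fun m => scaledCentralBinom m * ((2 * m : ℕ) * x ^ (2 * m - 1)) with hg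
  have hgs : Summable (fun k => g (n + k)) :=
    summable_mul_natCast_mul_pow_sub_one_of_injective
      (fun k => abs_scaledCentralBinom_le_one (n + k)) (fun i j h => by simpa using h) hx
  have hTs : Summable (fun k => scaledCentralBinom (n + k) * x ^ (2 * (n + k))) :=
    summable_mul_pow_of_injective (fun k => abs_scaledCentralBinom_le_one (n + k))
      (fun i j h => by simpa using h) hx
  have hshift (m : ℕ) : g (m + 1) = x ^ 2 * g m + x * (scaledCentralBinom m * x ^ (2 * m)) := by
    have hrec := two_mul_add_two_mul_scaledCentralBinom_succ m
    rcases m with _ | j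
    · norm_num at hrec
      simp only [hg]
      norm_num
      linear_combination x * hrec
    · simp only [hg, show 2 * (j + 1 + 1) - 1 = 2 * j + 3 by omega,
        show 2 * (j + 1) - 1 = 2 * j + 1 by omega]
      push_cast at hrec ⊢
      linear_combination x ^ (2 * j + 3) * hrec
  have hsplit : ∑' k, g (n + k) = g n + (x ^ 2 * ∑' k, g (n + k) + x * binomTail n x) := by
    rw [binomTail, ← tsum_mul_left, ← tsum_mul_left,
      ← (hgs.mul_left _).tsum_add (hTs.mul_left _)]
    simp only [← hshift]
    exact hgs.tsum_eq_zero_add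
  rw [(hasDerivAt_binomTail n hx).deriv]
  change (1 - x ^ 2) * ∑' k, g (n + k) = _
  rw [hg] at hsplit ⊢
  push_cast at hsplit ⊢
  linear_combination hsplit

lemma hasDerivAt_mul_binomTailDiv (hx : |x| < 1) :
    HasDerivAt (fun z => z * binomTailDiv n z) (binomTail n x) x := by
  convert hasDerivAt_tsum_mul_pow (abs_scaledCentralBinom_div_le_one n)
    (e := fun k => 2 * (n + k) + 1) (fun i j h => by simpa using h) hx using 1
  · funext z
    rw [binomTailDiv, ← tsum_mul_left]
    exact tsum_congr fun k => by ring
  · refine tsum_congr fun k => ?_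
    push_cast
    field_simp

end

lemma abs_sin_lt_one_of_mem_Ioo {t : ℝ} (ht : t ∈ Ioo (-(π / 2)) (π / 2)) : |sin t| < 1 := by
  have hc : 0 < cos t := cos_pos_of_mem_Ioo ht
  rw [← sq_lt_one_iff_abs_lt_one, sin_sq]
  linarith [pow_pos hc 2]

lemma hasDerivAt_mul_sin_pow_mul_one_div_cos (b : ℝ) (m : ℕ) {t : ℝ} (ht : cos t ≠ 0) :
    HasDerivAt (fun t => b * sin t ^ m * (1 / cos t))
      (m * b * sin t ^ (m - 1) + b * sin t ^ m * (1 / cos t) * tan t) t := by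
  have h := (((hasDerivAt_sin t).pow m).const_mul b).mul ((hasDerivAt_cos t).inv ht)
  simp only [one_div]
  refine h.congr_deriv ?_
  simp only [Pi.pow_apply, Pi.inv_apply, tan_eq_sin_div_cos]
  field_simp

section

variable (n : ℕ) {t : ℝ}

lemma hasDerivAt_cos_mul_binomTail_sin (ht : t ∈ Ioo (-(π / 2)) (π / 2)) :
    HasDerivAt (fun t => cos t * binomTail n (sin t))
      (2 * n * scaledCentralBinom n * sin t ^ (2 * n - 1)) t := by
  have hs := abs_sin_lt_one_of_mem_Ioo ht
  have hT := (hasDerivAt_binomTail n hs).differentiableAt.hasDerivAt.comp t (hasDerivAt_sin t)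
  refine ((hasDerivAt_cos t).mul hT).congr_deriv ?_
  rw [comp_apply]
  linear_combination one_sub_sq_mul_deriv_binomTail n hs + deriv (binomTail n) (sin t) * cos_sq' t

lemma hasDerivAt_sin_mul_binomTailDiv_sin (ht : t ∈ Ioo (-(π / 2)) (π / 2)) :
    HasDerivAt (fun t => sin t * binomTailDiv n (sin t)) (cos t * binomTail n (sin t)) t :=
  ((hasDerivAt_mul_binomTailDiv n (abs_sin_lt_one_of_mem_Ioo ht)).comp t
    (hasDerivAt_sin t)).congr_deriv (mul_comm _ _)

end

/-- For every integer `n ≥ 0` and real `y` with `−π/2 < y < π/2`,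
`sin(y) · ∑_{m=n}^∞ (C(2m,m)/4^m)·sin(y)^{2m}/(2m+1)`
equals
`∫_0^y (C(2n,n)/4^n)·sin(t)^{2n}·sec(t) dt −
 ∫_0^y (∫_0^t (C(2n,n)/4^n)·sin(u)^{2n}·sec(u)·tan(u) du) dt`. -/
theorem apery_tail_2m_plus_one_weak (n : ℕ) (y : ℝ) (hy : -(π / 2) < y) (hy' : y < π / 2) :
    Summable
      (fun k : ℕ =>
        (Nat.choose (2 * (n + k)) (n + k) : ℝ) / 4 ^ (n + k) *
          Real.sin y ^ (2 * (n + k)) / (2 * ((n : ℝ) + (k : ℝ)) + 1)) ∧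
    Real.sin y *
        ∑' k : ℕ,
          (Nat.choose (2 * (n + k)) (n + k) : ℝ) / 4 ^ (n + k) *
            Real.sin y ^ (2 * (n + k)) / (2 * ((n : ℝ) + (k : ℝ)) + 1) =
      (∫ t in (0 : ℝ)..y,
          (Nat.choose (2 * n) n : ℝ) / 4 ^ n * Real.sin t ^ (2 * n) * (1 / Real.cos t)) -
        ∫ t in (0 : ℝ)..y,
          ∫ u in (0 : ℝ)..t,
            (Nat.choose (2 * n) n : ℝ) / 4 ^ n * Real.sin u ^ (2 * n) *
              (1 / Real.cos u) * Real.tan u := by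
  set I := Ioo (-(π / 2)) (π / 2)
  have hI : uIcc 0 y ⊆ I :=
    ordConnected_Ioo.uIcc_subset ⟨by linarith [pi_pos], by linarith [pi_pos]⟩ ⟨hy, hy'⟩
  refine ⟨summable_binomTailDiv n (abs_sin_lt_one_of_mem_Ioo ⟨hy, hy'⟩), ?_⟩
  set f : ℝ → ℝ := fun t => scaledCentralBinom n * sin t ^ (2 * n) * (1 / cos t)
  set G : ℝ → ℝ := fun t => cos t * binomTail n (sin t)
  -- `Nat.centralBinom m` unfolds to `(2 * m).choose m`
  change sin y * binomTailDiv n (sin y) =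
    (∫ t in (0 : ℝ)..y, f t) - ∫ t in (0 : ℝ)..y, ∫ u in (0 : ℝ)..t, f u * tan u
  have hf {t} (ht : t ∈ I) := hasDerivAt_mul_sin_pow_mul_one_div_cos (scaledCentralBinom n)
    (2 * n) (cos_pos_of_mem_Ioo ht).ne'
  have hG {t} (ht : t ∈ I) := hasDerivAt_cos_mul_binomTail_sin n ht
  have integrable {g : ℝ → ℝ} {a b : ℝ} (hab : uIcc a b ⊆ I) (hg : ContinuousOn g I) :
      IntervalIntegrable g volume a b := (hg.mono hab).intervalIntegrable
  have hf_cont : ContinuousOn f I := fun t ht => (hf ht).continuousAt.continuousWithinAt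
  have hG_cont : ContinuousOn G I := fun t ht => (hG ht).continuousAt.continuousWithinAt
  have inner (t) (ht : t ∈ uIcc 0 y) : ∫ u in (0 : ℝ)..t, f u * tan u = f t - G t := by
    have hsub : uIcc 0 t ⊆ I := (uIcc_subset_uIcc left_mem_uIcc ht).trans hI
    rw [integral_eq_sub_of_hasDerivAt (f := f - G) (f' := fun u => f u * tan u)
      (fun u hu => ((hf (hsub hu)).sub (hG (hsub hu))).congr_deriv (by push_cast; ring))
      (integrable hsub (hf_cont.mul continuousOn_tan_Ioo))]
    simp [f, G, binomTail_zero]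
  rw [integral_congr inner, integral_sub (integrable hI hf_cont) (integrable hI hG_cont),
    sub_sub_cancel, integral_eq_sub_of_hasDerivAt
      (fun t ht => hasDerivAt_sin_mul_binomTailDiv_sin n (hI ht)) (integrable hI hG_cont)]
  simp
end

section
/- Let a_n := C(2n,n)/4^n and let f : ℕ → ℝ satisfy ∑_{n=0}^∞ a_n·|f(n)| < ∞. Then the family (a_{n_0}·f(n_1)/(2n_0−1)) indexed by pairs of integers with n_0 > n_1 ≥ 0 is absolutely summable and ∑_{n_0 > n_1 ≥ 0} a_{n_0}·f(n_1)/(2n_0−1) = ∑_{n=0}^∞ a_n·f(n). (This is the paper's Theorem 5.2 in equivalent general form: taking f(n) to be any of the convergent multiple tail series appearing there, prepending a strictly larger summation index n_0 with factor a_{n_0}/(2n_0−1) and deleting the factor a_{n_1} leaves the value of the multiple series unchanged.) -/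
/-!
Since `a (n + 1) = a n · (2n + 1) / (2n + 2)`, the weight `a m / (2m - 1)` is exactly the
decrement `a (m - 1) - a m`, and `a n → 0` because `a n ^ 2 · (n + 1) ≤ 1`. So summing over the
prepended index `n₀ > n₁` telescopes to `a n₁`, and absolute summability lets us sum fiberwise.
-/

open Filter Topology

def Nat.prodEquivPairsLt : ℕ × ℕ ≃ {p : ℕ × ℕ // p.2 < p.1} where
  toFun q := ⟨(q.1 + q.2 + 1, q.1), by omega⟩
  invFun p := (p.1.2, p.1.1 - p.1.2 - 1)
  left_inv q := by
    obtain ⟨n, k⟩ := q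
    simp only [Prod.mk.injEq, true_and]
    omega
  right_inv p := by
    obtain ⟨⟨n₀, n₁⟩, h⟩ := p
    simp only [Subtype.mk.injEq, Prod.mk.injEq, and_true]
    omega

section Telescoping

variable {a d : ℕ → ℝ}

theorem hasSum_nat_add_succ_of_sub_succ (hd : ∀ n, d (n + 1) = a n - a (n + 1))
    (ha : Antitone a) (ha₀ : Tendsto a atTop (𝓝 0)) (m : ℕ) :
    HasSum (fun k ↦ d (m + k + 1)) (a m) := by
  rw [hasSum_iff_tendsto_nat_of_nonneg fun k ↦ (hd _).symm ▸ sub_nonneg.mpr (ha (m + k).le_succ)]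
  have hpartial : ∀ K, ∑ k ∈ Finset.range K, d (m + k + 1) = a m - a (m + K) := fun K ↦ by
    simp only [hd]
    exact Finset.sum_range_sub' (fun k ↦ a (m + k)) K
  simp only [hpartial]
  simpa [add_comm m] using tendsto_const_nhds.sub (ha₀.comp (tendsto_add_atTop_nat m))

theorem hasSum_pairsLt_of_sub_succ (hd : ∀ n, d (n + 1) = a n - a (n + 1))
    (ha : Antitone a) (ha₀ : Tendsto a atTop (𝓝 0)) {f : ℕ → ℝ}
    (hf : Summable fun n ↦ a n * |f n|) :
    HasSum (fun p : {p : ℕ × ℕ // p.2 < p.1} ↦ d p.1.1 * f p.1.2) (∑' n, a n * f n) := by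
  have hd₀ : ∀ n, 0 ≤ d (n + 1) := fun n ↦ (hd n).symm ▸ sub_nonneg.mpr (ha n.le_succ)
  have htail := hasSum_nat_add_succ_of_sub_succ hd ha ha₀
  set F : ℕ × ℕ → ℝ := fun q ↦ d (q.1 + q.2 + 1) * f q.1
  have hfiber : ∀ n, HasSum (fun k ↦ F (n, k)) (a n * f n) := fun n ↦ (htail n).mul_right (f n)
  have hfiber_abs : ∀ n, HasSum (fun k ↦ |F (n, k)|) (a n * |f n|) := fun n ↦ by
    refine ((htail n).mul_right |f n|).congr_fun fun k ↦ ?_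
    rw [abs_mul, abs_of_nonneg (hd₀ _)]
  have hsummable : Summable F := by
    refine summable_abs_iff.mp ((summable_prod_of_nonneg fun _ ↦ abs_nonneg _).mpr ?_)
    exact ⟨fun n ↦ (hfiber_abs n).summable, hf.congr fun n ↦ (hfiber_abs n).tsum_eq.symm⟩
  rw [(hsummable.hasSum.prod_fiberwise hfiber).tsum_eq]
  exact Nat.prodEquivPairsLt.hasSum_iff.mp hsummable.hasSum

end Telescoping

noncomputable def centralBinomDivFourPow (n : ℕ) : ℝ := (Nat.choose (2 * n) n : ℝ) / 4 ^ n

namespace centralBinomDivFourPow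

local notation "a" => centralBinomDivFourPow

theorem nonneg (n : ℕ) : 0 ≤ a n := by
  unfold centralBinomDivFourPow
  positivity

theorem succ (n : ℕ) : a (n + 1) = a n * (2 * n + 1) / (2 * n + 2) := by
  have hrec : ((n : ℝ) + 1) * (Nat.choose (2 * (n + 1)) (n + 1) : ℝ)
      = 2 * (2 * n + 1) * (Nat.choose (2 * n) n : ℝ) := by
    exact_mod_cast Nat.succ_mul_centralBinom_succ n
  unfold centralBinomDivFourPow
  rw [pow_succ]
  field_simp
  linear_combination 2 * hrec

theorem sub_succ (n : ℕ) : a n - a (n + 1) = a (n + 1) / (2 * ((n + 1 : ℕ) : ℝ) - 1) := by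
  have h : (2 : ℝ) * n + 1 ≠ 0 := by positivity
  rw [succ, Nat.cast_succ, show (2 : ℝ) * (n + 1) - 1 = 2 * n + 1 by ring]
  field_simp
  ring

theorem antitone : Antitone a := antitone_nat_of_succ_le fun n ↦ by
  refine sub_nonneg.mp (sub_succ n ▸ div_nonneg (nonneg _) ?_)
  push_cast
  linarith [n.cast_nonneg (α := ℝ)]

theorem sq_mul_succ_le_one (n : ℕ) : a n ^ 2 * (n + 1) ≤ 1 := by
  induction n with
  | zero => simp [centralBinomDivFourPow]
  | succ n ih =>
    rw [succ, div_pow, div_mul_eq_mul_div, div_le_one (by positivity)]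
    push_cast
    nlinarith [sq_nonneg (a n), n.cast_nonneg (α := ℝ)]

theorem tendsto_zero : Tendsto a atTop (𝓝 0) := by
  refine squeeze_zero nonneg (fun n ↦ ?_)
    (by simpa only [Real.sqrt_zero] using tendsto_one_div_add_atTop_nhds_zero_nat.sqrt)
  rw [Real.le_sqrt (nonneg n) (by positivity), le_div_iff₀ (by positivity)]
  exact sq_mul_succ_le_one n

end centralBinomDivFourPow

/-- Let `a_n := C(2n,n)/4^n` and let `f : ℕ → ℝ` satisfy
`∑ a_n·|f n| < ∞`. Then the family `a_{n₀}·f(n₁)/(2n₀−1)` indexed by pairs `n₀ > n₁ ≥ 0`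
is absolutely summable with sum `∑_{n=0}^∞ a_n·f(n)`. -/
theorem apery_prepend_gamma_block (f : ℕ → ℝ)
    (hf : Summable fun n : ℕ => (Nat.choose (2 * n) n : ℝ) / 4 ^ n * |f n|) :
    HasSum
      (fun p : {p : ℕ × ℕ // p.2 < p.1} =>
        (Nat.choose (2 * p.1.1) p.1.1 : ℝ) / 4 ^ p.1.1 * f p.1.2 /
          (2 * (p.1.1 : ℝ) - 1))
      (∑' n : ℕ, (Nat.choose (2 * n) n : ℝ) / 4 ^ n * f n) := by
  have key := hasSum_pairsLt_of_sub_succ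
    (d := fun m ↦ centralBinomDivFourPow m / (2 * (m : ℝ) - 1))
    (fun n ↦ (centralBinomDivFourPow.sub_succ n).symm) centralBinomDivFourPow.antitone
    centralBinomDivFourPow.tendsto_zero hf
  exact key.congr_fun fun p ↦ mul_div_right_comm _ _ _
end
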